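/- The derivative at 1 of the sum-generating polynomial of a-parking functions, D(n,a) := P'(n,a)(1), satisfies D(n,a) - Σ_{k=0}^{n} C(n,k) · D(n-k, a+k-1) = n · a(a+n)^{n-1}, with D(0,a)=0 and D(n,0)=0. -/

import Mathlib

/-- The weakly increasing sorted version of a vector of naturals. -/
def sortPF {n : ℕ} (p : Fin n → ℕ) : List ℕ :=
  Multiset.sort (↑(List.ofFn p)) (· ≤ ·)

/-- `p` is an `a`-parking function of length `n`: all entries are positive and the
`i`-th entry (0-based) of the sorted version is at most `a + i` (i.e. `a + i - 1` 1-based). -/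
def IsAPF (a : ℕ) {n : ℕ} (p : Fin n → ℕ) : Prop :=
  (∀ i, 1 ≤ p i) ∧ ∀ i : Fin n, (sortPF p).getD i 0 ≤ a + (i : ℕ)

/-- `p` is an ordinary parking function of length `n`. -/
def IsPF {n : ℕ} (p : Fin n → ℕ) : Prop :=
  (∀ i, 1 ≤ p i ∧ p i ≤ n) ∧ ∀ i : Fin n, (sortPF p).getD i 0 ≤ (i : ℕ) + 1

instance (a n : ℕ) : DecidablePred (fun p : Fin n → ℕ => IsAPF a p) :=
  fun p => decidable_of_iff
    ((∀ i, 1 ≤ p i) ∧ ∀ i : Fin n, (sortPF p).getD i 0 ≤ a + (i : ℕ)) Iff.rfl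

/-- The (finite) set of all `a`-parking functions of length `n`. -/
def pfFinset (a n : ℕ) : Finset (Fin n → ℕ) :=
  (Fintype.piFinset fun _ => Finset.Icc 1 (a + n)).filter (fun p => IsAPF a p)

/-- The generating polynomial of `a`-parking functions of length `n` by sum. -/
noncomputable def Ppoly (a n : ℕ) : Polynomial ℚ :=
  ∑ p ∈ pfFinset a n, Polynomial.X ^ (∑ i, p i)

/-- `D(n,a) := P'(n,a)(1)`. -/
noncomputable def Dfun (a n : ℕ) : ℚ :=
  (Polynomial.derivative (Ppoly a n)).eval 1

/-!
If `K` is the set of positions where an `a`-parking function (`a ≥ 1`) of length `n` takes the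
value `1`, subtracting `1` from the other entries gives an `(a + #K - 1)`-parking function of length
`n - #K`, and every such function arises exactly once. Hence
`P(n,a) = X^n · Σ_k C(n,k) P(n-k, a+k-1)`. Differentiating at `X = 1` gives
`D(n,a) - Σ_k C(n,k) D(n-k, a+k-1) = n · P(n,a)(1)`, while evaluating at `X = 1` and using
`Σ_k C(n,k) (b+k) q^(n-k) = b (q+1)^n + n (q+1)^(n-1)` shows, by induction on `a + n`, that
`P(n,a)(1) = a (a+n)^(n-1)`.
-/

open Finset Polynomial

section SortPF

variable {n : ℕ}

lemma coe_sortPF (p : Fin n → ℕ) : (sortPF p : Multiset ℕ) = univ.val.map p := by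
  rw [sortPF, Multiset.sort_eq, List.ofFn_eq_map]; rfl

lemma length_sortPF (p : Fin n → ℕ) : (sortPF p).length = n := by
  simpa using congrArg Multiset.card (coe_sortPF p)

lemma mem_sortPF {p : Fin n → ℕ} {x : ℕ} : x ∈ sortPF p ↔ ∃ i, p i = x := by
  rw [← Multiset.mem_coe, coe_sortPF]; simp

lemma sortPF_eq_of_coe_eq {p : Fin n → ℕ} {l : List ℕ} (hl : l.Pairwise (· ≤ ·))
    (h : (l : Multiset ℕ) = univ.val.map p) : sortPF p = l :=
  List.Perm.eq_of_pairwise' (Multiset.pairwise_sort _ _) hl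
    (Multiset.coe_eq_coe.mp (by rw [coe_sortPF, h]))

end SortPF

lemma forall_getD_replicate_append_map_succ_le (b c : ℕ) (l : List ℕ) :
    (∀ i < c + l.length, (List.replicate c 1 ++ l.map (· + 1)).getD i 0 ≤ b + 1 + i) ↔
      ∀ j < l.length, l.getD j 0 ≤ b + c + j := by
  constructor
  · intro h j hj
    have := h (c + j) (by omega)
    rw [List.getD_append_right _ _ _ _ (by simp), List.length_replicate, Nat.add_sub_cancel_left,
      List.getD_eq_getElem _ _ (by simpa using hj), List.getElem_map,
      ← List.getD_eq_getElem _ 0 hj] at this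
    omega
  · intro h i hi
    by_cases hic : i < c
    · rw [List.getD_append _ _ _ _ (by simpa using hic), List.getD_replicate _ hic]; omega
    · have hj : i - c < l.length := by omega
      rw [List.getD_append_right _ _ _ _ (by simp; omega), List.length_replicate,
        List.getD_eq_getElem _ _ (by simpa using hj), List.getElem_map,
        ← List.getD_eq_getElem _ 0 hj]
      have := h (i - c) hj
      omega

section Split

variable {n : ℕ}

noncomputable def complEmb (K : Finset (Fin n)) : Fin (n - #K) ↪o Fin n :=
  Kᶜ.orderEmbOfFin (by rw [card_compl, Fintype.card_fin])

lemma complEmb_notMem (K : Finset (Fin n)) (j : Fin (n - #K)) : complEmb K j ∉ K :=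
  mem_compl.mp (orderEmbOfFin_mem _ _ j)

lemma exists_complEmb_eq {K : Finset (Fin n)} {i : Fin n} (hi : i ∉ K) :
    ∃ j, complEmb K j = i := by
  rw [← Set.mem_range, complEmb, range_orderEmbOfFin, coe_compl, Set.mem_compl_iff, mem_coe]
  exact hi

lemma map_complEmb_univ (K : Finset (Fin n)) : univ.map (complEmb K).toEmbedding = Kᶜ :=
  map_orderEmbOfFin_univ _ _

def SplitsAt (K : Finset (Fin n)) (p : Fin n → ℕ) (q : Fin (n - #K) → ℕ) : Prop :=
  (∀ i ∈ K, p i = 1) ∧ ∀ j, p (complEmb K j) = q j + 1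

noncomputable def fillOnes (K : Finset (Fin n)) (q : Fin (n - #K) → ℕ) : Fin n → ℕ :=
  Function.extend (complEmb K) (q · + 1) 1

noncomputable def dropOnes (K : Finset (Fin n)) (p : Fin n → ℕ) : Fin (n - #K) → ℕ :=
  fun j => p (complEmb K j) - 1

variable {K : Finset (Fin n)} {p : Fin n → ℕ} {q : Fin (n - #K) → ℕ}

lemma splitsAt_fillOnes (K : Finset (Fin n)) (q : Fin (n - #K) → ℕ) :
    SplitsAt K (fillOnes K q) q := by
  refine ⟨fun i hi => Function.extend_apply' _ _ _ ?_, fun j => ?_⟩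
  · rintro ⟨j, rfl⟩
    exact complEmb_notMem K j hi
  · exact (complEmb K).injective.extend_apply _ _ j

lemma splitsAt_dropOnes (hp : ∀ i, 1 ≤ p i) (hK : ∀ i, p i = 1 ↔ i ∈ K) :
    SplitsAt K p (dropOnes K p) := by
  refine ⟨fun i hi => (hK i).mpr hi, fun j => ?_⟩
  have : p (complEmb K j) ≠ 1 := fun h => complEmb_notMem K j ((hK _).mp h)
  have := hp (complEmb K j)
  simp only [dropOnes]
  omega

lemma one_le_dropOnes (hp : ∀ i, 1 ≤ p i) (hK : ∀ i, p i = 1 ↔ i ∈ K) (j : Fin (n - #K)) :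
    1 ≤ dropOnes K p j := by
  have : p (complEmb K j) ≠ 1 := fun h => complEmb_notMem K j ((hK _).mp h)
  have := hp (complEmb K j)
  simp only [dropOnes]
  omega

namespace SplitsAt

lemma dropOnes_eq (h : SplitsAt K p q) : dropOnes K p = q := by
  funext j
  simp [dropOnes, h.2 j]

lemma fillOnes_eq (h : SplitsAt K p q) : fillOnes K q = p := by
  funext i
  by_cases hi : i ∈ K
  · rw [(splitsAt_fillOnes K q).1 i hi, h.1 i hi]
  · obtain ⟨j, rfl⟩ := exists_complEmb_eq hi
    rw [(splitsAt_fillOnes K q).2 j, h.2 j]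

lemma eq_one_iff (h : SplitsAt K p q) (hq : ∀ j, 1 ≤ q j) (i : Fin n) : p i = 1 ↔ i ∈ K := by
  refine ⟨fun hpi => ?_, h.1 i⟩
  by_contra hi
  obtain ⟨j, rfl⟩ := exists_complEmb_eq hi
  have := hq j
  rw [h.2 j] at hpi
  omega

lemma one_le (h : SplitsAt K p q) (i : Fin n) : 1 ≤ p i := by
  by_cases hi : i ∈ K
  · rw [h.1 i hi]
  · obtain ⟨j, rfl⟩ := exists_complEmb_eq hi
    rw [h.2 j]
    omega

lemma sum_eq (h : SplitsAt K p q) : ∑ i, p i = n + ∑ j, q j := by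
  have hKn : #K ≤ n := card_le_univ K |>.trans_eq (Fintype.card_fin n)
  rw [← sum_add_sum_compl K p, sum_congr rfl h.1, ← map_complEmb_univ K, sum_map]
  simp only [RelEmbedding.coe_toEmbedding, h.2, sum_add_distrib, sum_const, card_univ,
    Fintype.card_fin, smul_eq_mul, mul_one]
  omega

lemma map_univ_val (h : SplitsAt K p q) :
    univ.val.map p = Multiset.replicate #K 1 + (univ.val.map q).map (· + 1) := by
  have huniv : (univ : Finset (Fin n)).val = K.val + Kᶜ.val := by
    rw [← disjUnion_val K Kᶜ disjoint_compl_right, disjUnion_eq_union, union_compl]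
  rw [huniv, Multiset.map_add, ← map_complEmb_univ K, map_val, Multiset.map_map,
    Multiset.map_map, Multiset.map_congr rfl fun i hi => h.1 i hi, Multiset.map_const',
    card_val]
  congr 1
  exact Multiset.map_congr rfl fun j _ => h.2 j

lemma sortPF_eq (h : SplitsAt K p q) :
    sortPF p = List.replicate #K 1 ++ (sortPF q).map (· + 1) := by
  refine sortPF_eq_of_coe_eq ?_ ?_
  · refine List.pairwise_append.mpr ⟨List.pairwise_replicate.mpr (Or.inr le_rfl),
      (Multiset.pairwise_sort _ _).map _ fun _ _ => Nat.succ_le_succ, ?_⟩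
    intro x hx y hy
    obtain ⟨z, -, rfl⟩ := List.mem_map.mp hy
    rw [List.eq_of_mem_replicate hx]
    omega
  · rw [h.map_univ_val, ← Multiset.coe_add, ← Multiset.coe_replicate, ← Multiset.map_coe,
      coe_sortPF]

lemma isAPF_iff (h : SplitsAt K p q) (hq : ∀ j, 1 ≤ q j) (b : ℕ) :
    IsAPF (b + 1) p ↔ IsAPF (b + #K) q := by
  have hKn : #K ≤ n := card_le_univ K |>.trans_eq (Fintype.card_fin n)
  have hlen : #K + (sortPF q).length = n := by rw [length_sortPF]; omega
  have key := forall_getD_replicate_append_map_succ_le b #K (sortPF q)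
  rw [hlen, ← h.sortPF_eq, length_sortPF] at key
  simp only [IsAPF, Fin.forall_iff, h.one_le, hq, implies_true, true_and]
  exact key

end SplitsAt

end Split

lemma IsAPF.apply_le {a n : ℕ} {p : Fin n → ℕ} (h : IsAPF a p) (i : Fin n) : p i ≤ a + n := by
  obtain ⟨t, ht, hpt⟩ := List.mem_iff_getElem.mp (mem_sortPF.mpr ⟨i, rfl⟩)
  rw [length_sortPF] at ht
  have := h.2 ⟨t, ht⟩
  rw [List.getD_eq_getElem _ _ (by rwa [length_sortPF]), hpt] at this
  omega

lemma mem_pfFinset {a n : ℕ} {p : Fin n → ℕ} : p ∈ pfFinset a n ↔ IsAPF a p := by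
  simp only [pfFinset, mem_filter, Fintype.mem_piFinset, mem_Icc, and_iff_right_iff_imp]
  exact fun h i => ⟨h.1 i, IsAPF.apply_le h i⟩

lemma pfFinset_zero_right (a : ℕ) : pfFinset a 0 = {0} :=
  eq_singleton_iff_unique_mem.mpr
    ⟨mem_pfFinset.mpr ⟨finZeroElim, finZeroElim⟩, fun _ _ => Subsingleton.elim _ _⟩

lemma pfFinset_zero_left (n : ℕ) : pfFinset 0 (n + 1) = ∅ := by
  refine eq_empty_of_forall_notMem fun p hp => ?_
  obtain ⟨hpos, hsort⟩ := mem_pfFinset.mp hp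
  have hlen : 0 < (sortPF p).length := by rw [length_sortPF]; omega
  obtain ⟨i, hi⟩ := mem_sortPF.mp (List.getElem_mem hlen)
  have := hsort 0
  rw [Fin.val_zero, List.getD_eq_getElem _ _ hlen, ← hi] at this
  have := hpos i
  omega

lemma Ppoly_zero_right (a : ℕ) : Ppoly a 0 = 1 := by
  simp [Ppoly, pfFinset_zero_right]

lemma Ppoly_zero_left (n : ℕ) : Ppoly 0 (n + 1) = 0 := by
  simp [Ppoly, pfFinset_zero_left]

lemma sum_fiber_X_pow_sum (b n : ℕ) (K : Finset (Fin n)) :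
    ∑ p ∈ pfFinset (b + 1) n with ({i | p i = 1} : Finset (Fin n)) = K,
        (X : ℚ[X]) ^ (∑ i, p i) = X ^ n * Ppoly (b + #K) (n - #K) := by
  have hfiber {p : Fin n → ℕ} : ({i | p i = 1} : Finset (Fin n)) = K ↔ ∀ i, p i = 1 ↔ i ∈ K := by
    simp [Finset.ext_iff]
  rw [Ppoly, mul_sum]
  refine sum_nbij' (dropOnes K) (fillOnes K) ?_ ?_ ?_ ?_ ?_ <;>
    simp only [mem_filter, mem_pfFinset, hfiber, and_imp]
  · intro p hp hK
    exact ((splitsAt_dropOnes hp.1 hK).isAPF_iff (one_le_dropOnes hp.1 hK) b).mp hp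
  · intro q hq
    have hs := splitsAt_fillOnes K q
    exact ⟨(hs.isAPF_iff hq.1 b).mpr hq, hs.eq_one_iff hq.1⟩
  · intro p hp hK
    exact (splitsAt_dropOnes hp.1 hK).fillOnes_eq
  · intro q _
    exact (splitsAt_fillOnes K q).dropOnes_eq
  · intro p hp hK
    rw [(splitsAt_dropOnes hp.1 hK).sum_eq, pow_add]

lemma Ppoly_succ_left (b n : ℕ) :
    Ppoly (b + 1) n = X ^ n * ∑ k ∈ range (n + 1), n.choose k • Ppoly (b + k) (n - k) := by
  rw [Ppoly, ← sum_fiberwise (pfFinset (b + 1) n) (fun p => ({i | p i = 1} : Finset (Fin n)))]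
  simp only [sum_fiber_X_pow_sum, ← mul_sum]
  rw [← powerset_univ, sum_powerset, card_univ, Fintype.card_fin]
  refine congrArg _ (sum_congr rfl fun k _ => ?_)
  rw [sum_powersetCard k univ (fun c => Ppoly (b + c) (n - c)), card_univ, Fintype.card_fin]

section Binomial

variable {R : Type*} [CommSemiring R]

lemma sum_choose_mul_pow (q : R) (n : ℕ) :
    ∑ k ∈ range (n + 1), n.choose k * q ^ (n - k) = (q + 1) ^ n := by
  rw [add_comm q 1, add_pow]
  exact sum_congr rfl fun k _ => by rw [one_pow, one_mul, mul_comm]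

lemma sum_mul_choose_mul_pow (q : R) (n : ℕ) :
    ∑ k ∈ range (n + 1), k * n.choose k * q ^ (n - k) = n * (q + 1) ^ (n - 1) := by
  rcases n with _ | m
  · simp
  rw [sum_range_succ', Nat.cast_zero, zero_mul, zero_mul, add_zero, Nat.add_sub_cancel,
    ← sum_choose_mul_pow, mul_sum]
  refine sum_congr rfl fun k _ => ?_
  rw [Nat.add_sub_add_right, mul_comm (k + 1 : ℕ).cast, ← mul_assoc, ← Nat.cast_mul,
    ← Nat.add_one_mul_choose_eq, Nat.cast_mul, mul_assoc]

end Binomial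

lemma eval_one_derivative_X_pow_mul {R : Type*} [CommSemiring R] (n : ℕ) (f : R[X]) :
    (derivative (X ^ n * f)).eval 1 = n * (X ^ n * f).eval 1 + (derivative f).eval 1 := by
  simp [derivative_mul, derivative_X_pow]

lemma eval_one_Ppoly_succ_left (b n : ℕ) :
    (Ppoly (b + 1) n).eval 1 = ∑ k ∈ range (n + 1), n.choose k * (Ppoly (b + k) (n - k)).eval 1 := by
  simp [Ppoly_succ_left b n, eval_finsetSum]

lemma Dfun_succ_left (b n : ℕ) :
    Dfun (b + 1) n =
      n * (Ppoly (b + 1) n).eval 1 + ∑ k ∈ range (n + 1), n.choose k * Dfun (b + k) (n - k) := by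
  rw [Dfun, Ppoly_succ_left, eval_one_derivative_X_pow_mul, ← Ppoly_succ_left, derivative_sum,
    eval_finsetSum]
  simp [Dfun]

/-- The count `a (a + n) ^ (n - 1)` multiplied by `a + n`: unlike the count itself this form also
holds for `n = 0`, so the induction treats the term `k = n` of the recurrence like the others. -/
lemma add_mul_eval_one_Ppoly (a n : ℕ) : ((a : ℚ) + n) * (Ppoly a n).eval 1 = a * (a + n) ^ n := by
  induction hs : a + n using Nat.strong_induction_on generalizing a n with
  | _ s ih =>
  rcases n with _ | m
  · simp [Ppoly_zero_right]
  rcases a with _ | b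
  · simp [Ppoly_zero_left]
  set q : ℚ := b + (m + 1) with hq
  have hterm (k : ℕ) (hk : k ∈ range (m + 1 + 1)) :
      q * (Ppoly (b + k) (m + 1 - k)).eval 1 = (b + k) * q ^ (m + 1 - k) := by
    have hk : k ≤ m + 1 := Nat.lt_succ_iff.mp (mem_range.mp hk)
    have hcast : ((b + k : ℕ) : ℚ) + ((m + 1 - k : ℕ) : ℚ) = q := by
      rw [Nat.cast_sub hk, hq]
      push_cast
      ring
    have := ih (b + k + (m + 1 - k)) (by omega) (b + k) (m + 1 - k) rfl
    rw [hcast] at this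
    push_cast at this
    exact this
  have hsum : q * (Ppoly (b + 1) (m + 1)).eval 1 = b * (q + 1) ^ (m + 1) + (m + 1) * (q + 1) ^ m := by
    rw [eval_one_Ppoly_succ_left, mul_sum,
      sum_congr rfl fun k hk => by rw [mul_left_comm, hterm k hk]]
    have h1 := sum_choose_mul_pow q (m + 1)
    have h2 := sum_mul_choose_mul_pow q (m + 1)
    push_cast at h1 h2
    rw [← h1, ← h2, mul_sum, ← sum_add_distrib]
    exact sum_congr rfl fun k _ => by ring
  have hq0 : q ≠ 0 := by positivity
  refine mul_left_cancel₀ hq0 ?_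
  rw [hq] at hsum ⊢
  push_cast
  linear_combination (↑b + ↑m + 2) * hsum

lemma natCast_mul_eval_one_Ppoly (a n : ℕ) :
    (n : ℚ) * (Ppoly a n).eval 1 = n * (a * (a + n) ^ (n - 1)) := by
  rcases n with _ | m
  · simp
  have hpos : (a : ℚ) + (m + 1 : ℕ) ≠ 0 := by positivity
  have := add_mul_eval_one_Ppoly a (m + 1)
  rw [pow_succ, ← mul_assoc, mul_comm _ ((a : ℚ) + _)] at this
  rw [Nat.add_sub_cancel, mul_left_cancel₀ hpos this]

/-- `D(n,a) - Σ_{k=0}^n C(n,k) D(n-k,a+k-1) = n · a(a+n)^(n-1)` for `a ≥ 1`, with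
`D(0,a) = 0` and `D(n,0) = 0`. -/
theorem Dfun_recurrence :
    (∀ a n : ℕ, 1 ≤ a →
        Dfun a n - (∑ k ∈ Finset.range (n + 1),
            (n.choose k : ℚ) * Dfun (a + k - 1) (n - k)) =
          (n : ℚ) * ((a : ℚ) * ((a : ℚ) + (n : ℚ)) ^ (n - 1))) ∧
    (∀ a : ℕ, Dfun a 0 = 0) ∧
    (∀ n : ℕ, Dfun 0 n = 0) := by
  refine ⟨fun a n ha => ?_, fun a => by simp [Dfun, Ppoly_zero_right], fun n => ?_⟩
  · obtain ⟨b, rfl⟩ := Nat.exists_eq_add_of_le' ha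
    simp only [Nat.add_right_comm b 1, Nat.add_sub_cancel]
    rw [Dfun_succ_left, add_sub_cancel_right, natCast_mul_eval_one_Ppoly]
  · rcases n with _ | m
    · simp [Dfun, Ppoly_zero_right]
    · simp [Dfun, Ppoly_zero_left]
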